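/- Let q = (τ⁺, τ⁻, ℘) be a couple and d ≥ 1. The map sending (η, ζ) ∈ C^q(ℝ^d) × D^q(ℝ^d) to the nodewise combination ξ defined by ξ_n = ζ_n + ι_n·η_n/2 for every node n of q is a linear isomorphism onto D^{τ*}(ℝ^d). Moreover, for all η, ζ ∈ ℝ^d it restricts to a bijection from C^q_η × D^q_ζ onto D^{τ*}_{ζ+η/2, ζ−η/2}. -/

import Mathlib

noncomputable section
open scoped Classical

namespace WickNLS

/-! ## Ternary trees, signed ternary trees and couples -/

/-- Ternary trees: every non-leaf (branching) node has three ordered children. -/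
inductive TTree : Type
  | leaf : TTree
  | node : TTree → TTree → TTree → TTree
deriving DecidableEq

namespace TTree

/-- The order of a ternary tree: the number of its branching nodes. -/
def order : TTree → ℕ
  | leaf => 0
  | node a b c => order a + order b + order c + 1

/-- The subtree of `t` at the path `p` from the root (child indices `0,1,2` denote the
left, middle and right child, respectively), if `p` is a valid path. -/
def sub : TTree → List (Fin 3) → Option TTree
  | t, [] => some t
  | leaf, _ :: _ => none
  | node a b c, i :: p => sub (if i = 0 then a else if i = 1 then b else c) p

/-- `p` is (the path of) a node of `t`. -/
def valid (t : TTree) (p : List (Fin 3)) : Prop := (t.sub p).isSome = true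

/-- `p` is (the path of) a leaf node of `t`. -/
def isLeaf (t : TTree) (p : List (Fin 3)) : Prop := t.sub p = some leaf

/-- `p` is (the path of) a branching node of `t`. -/
def isBranch (t : TTree) (p : List (Fin 3)) : Prop := ∃ a b c, t.sub p = some (node a b c)

/-- Replace the subtree at the path `p` by `r`. -/
def replace : TTree → List (Fin 3) → TTree → TTree
  | _, [], r => r
  | leaf, _ :: _, _ => leaf
  | node a b c, i :: p, r =>
      if i = 0 then node (replace a p r) b c
      else if i = 1 then node a (replace b p r) c
      else node a b (replace c p r)

end TTree

/-- The sign `ι` of the node at path `p` of a signed ternary tree whose root carries the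
sign `σ`: because `ι_{b[j]} = ι_b · (-1)^(j+1)`, the sign is kept by the two outer
children and flipped by the middle child. -/
def nodeSign (σ : ℤ) (p : List (Fin 3)) : ℤ := σ * (-1) ^ (p.count (1 : Fin 3))

/-- Nodes of a couple: `(true, p)` is the node at path `p` of the positive tree `τ⁺`,
and `(false, p)` is the node at path `p` of the negative tree `τ⁻`. -/
abbrev CNode : Type := Bool × List (Fin 3)

/-- The (raw data of a) couple `(τ⁺, τ⁻, ℘)`: a positive tree `tp`, a negative tree `tm`,
the pairing `pr` sending each leaf of `tp` to its partner leaf of `tm`, and the inverse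
pairing `pl`. -/
structure Couple : Type where
  tp : TTree
  tm : TTree
  pr : List (Fin 3) → List (Fin 3)
  pl : List (Fin 3) → List (Fin 3)

namespace Couple

/-- The tree of the given side of the couple (`true` ↦ positive tree). -/
def tree (q : Couple) (b : Bool) : TTree := if b then q.tp else q.tm

/-- The sign of a node of a couple (the root of `τ⁺` has sign `+1`, that of `τ⁻` has
sign `-1`). -/
def sign (x : CNode) : ℤ := nodeSign (if x.1 then 1 else -1) x.2

/-- `x` is a node of the couple `q`. -/
def isNode (q : Couple) (x : CNode) : Prop := (q.tree x.1).valid x.2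

/-- `x` is a leaf of the couple `q`. -/
def isLeafN (q : Couple) (x : CNode) : Prop := (q.tree x.1).isLeaf x.2

/-- `x` is a branching node of the couple `q`. -/
def isBranchN (q : Couple) (x : CNode) : Prop := (q.tree x.1).isBranch x.2

/-- Well-formedness of a couple: the two trees have the same order; `pr` is a bijection
(with inverse `pl`) from the leaves of the positive tree onto the leaves of the negative
tree, pairing leaves of opposite signs.  The fields `pr_norm` and `pl_norm` normalize the
(irrelevant) values of `pr` and `pl` off their domains, so that equality of raw couples
is equality of couples. -/
structure IsCouple (q : Couple) : Prop where
  order_eq : q.tp.order = q.tm.order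
  pr_leaf : ∀ l, q.tp.isLeaf l → q.tm.isLeaf (q.pr l)
  pl_leaf : ∀ l, q.tm.isLeaf l → q.tp.isLeaf (q.pl l)
  pl_pr : ∀ l, q.tp.isLeaf l → q.pl (q.pr l) = l
  pr_pl : ∀ l, q.tm.isLeaf l → q.pr (q.pl l) = l
  sign_pr : ∀ l, q.tp.isLeaf l → sign (false, q.pr l) = - sign (true, l)
  pr_norm : ∀ l, ¬ q.tp.isLeaf l → q.pr l = []
  pl_norm : ∀ l, ¬ q.tm.isLeaf l → q.pl l = []

/-- The set `A_p` attached to the leaf pair `p = {(true, l), (false, q.pr l)}`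
(indexed by the leaf `l` of the positive tree): the set of all nodes `m` of `q` with
`m ⪰ (true, l)` or `m ⪰ (false, q.pr l)`, i.e. all weak ancestors of the two
paired leaves. -/
def pairSet (q : Couple) (l : List (Fin 3)) : Set CNode :=
  {x | (x.1 = true ∧ x.2 <+: l) ∨ (x.1 = false ∧ x.2 <+: q.pr l)}

/-- Two nodes `x, y` of `q` are conjugate, `x ∼ y`, if for every leaf pair `p ∈ ℘`
either both belong to `A_p` or neither does. -/
def Conj (q : Couple) (x y : CNode) : Prop :=
  ∀ l, q.tp.isLeaf l →
    ((x ∈ q.pairSet l ∧ y ∈ q.pairSet l) ∨ (x ∉ q.pairSet l ∧ y ∉ q.pairSet l))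

/-- The leaf of the leaf pair indexed by the `tp`-leaf `l` carrying the sign `+1`. -/
def posLeaf (q : Couple) (l : List (Fin 3)) : CNode :=
  if sign (true, l) = 1 then ((true, l) : CNode) else ((false, q.pr l) : CNode)

/-- The leaf of the leaf pair indexed by the `tp`-leaf `l` carrying the sign `-1`. -/
def negLeaf (q : Couple) (l : List (Fin 3)) : CNode :=
  if sign (true, l) = 1 then ((false, q.pr l) : CNode) else ((true, l) : CNode)

end Couple

/-- `x` is a weak ancestor of `y` (i.e. `x ⪰ y` fails ... this states `y ⪯ x` in the
subtree order: `y` lies in the subtree rooted at `x`), as nodes of a couple. -/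
def anc (x y : CNode) : Prop := x.1 = y.1 ∧ x.2 <+: y.2

/-- The indicator `1_{x ⪰ y}` (i.e. `x` is a weak ancestor of `y`), with values in `ℤ`. -/
def ind1 (x y : CNode) : ℤ := if anc x y then 1 else 0

/-! ## Decorations -/

section Deco

variable {G : Type*} [AddCommGroup G]

/-- `ζ` is a `𝒟`-decoration of the ternary tree `t` (whose root carries sign `σ`),
valued in the additive abelian group `G`:  `ι_b ζ_b = ∑_{n : parent n = b} ι_n ζ_n`
for every branching node `b`. -/
def IsDDecoT (t : TTree) (σ : ℤ) (ζ : List (Fin 3) → G) : Prop :=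
  ∀ p, t.isBranch p →
    nodeSign σ p • ζ p = ∑ j : Fin 3, nodeSign σ (p ++ [j]) • ζ (p ++ [j])

/-- `η` is a `𝒞`-decoration of the ternary tree `t` valued in `G`:
`η_b = ∑_{n : parent n = b} η_n` for every branching node `b`. -/
def IsCDecoT (t : TTree) (η : List (Fin 3) → G) : Prop :=
  ∀ p, t.isBranch p → η p = ∑ j : Fin 3, η (p ++ [j])

/-- `ζ ∈ 𝒟^q(G)`: a map on the nodes of the couple `q` restricting to `𝒟`-decorations of
both trees and taking equal values on the two leaves of every leaf pair. -/
def IsDDeco (q : Couple) (ζ : CNode → G) : Prop :=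
  IsDDecoT q.tp 1 (fun p => ζ (true, p)) ∧
  IsDDecoT q.tm (-1) (fun p => ζ (false, p)) ∧
  ∀ l, q.tp.isLeaf l → ζ (true, l) = ζ (false, q.pr l)

/-- `η ∈ 𝒞^q(G)`: a map on the nodes of the couple `q` restricting to `𝒞`-decorations of
both trees and taking equal values on the two leaves of every leaf pair. -/
def IsCDeco (q : Couple) (η : CNode → G) : Prop :=
  IsCDecoT q.tp (fun p => η (true, p)) ∧
  IsCDecoT q.tm (fun p => η (false, p)) ∧
  ∀ l, q.tp.isLeaf l → η (true, l) = η (false, q.pr l)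

/-- `ξ ∈ 𝒟^{τ*}(G)`: a map on the nodes of `q` restricting to a `𝒟`-decoration of each of
the two trees (with no constraint at leaf pairs). -/
def IsDDecoPair (q : Couple) (ξ : CNode → G) : Prop :=
  IsDDecoT q.tp 1 (fun p => ξ (true, p)) ∧
  IsDDecoT q.tm (-1) (fun p => ξ (false, p))

end Deco

/-! The inverse of `(η, ζ) ↦ ξ = ζ + ι η / 2` is explicit. Both `η` and `ζ` take equal values on
the two leaves of a pair while `ι` takes opposite ones, so `ξ_l - ξ_{l'} = ι_l η_l` at every leaf
pair; a `𝒞`-decoration is the extension of its leaf values by leaf sums, so `ξ` determines `η`,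
and then `ζ = ξ - ι η / 2`. Conversely this recipe turns every `ξ ∈ 𝒟^{τ*}` into a
`𝒞`-decoration `η` and a `𝒟`-decoration `ζ`, because `ι² = 1` makes `ι η` a `𝒟`-decoration
whenever `η` is a `𝒞`-decoration. Leaf sums also show that each of `η` and `ζ` takes a single
value at the two roots, which pins down the fibres over the root values. -/

namespace TTree

lemma sub_nil (t : TTree) : t.sub [] = some t := by cases t <;> rfl

lemma sub_append (t : TTree) (p r : List (Fin 3)) :
    t.sub (p ++ r) = (t.sub p).bind (·.sub r) := by
  induction p generalizing t with
  | nil => simp [sub_nil]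
  | cons i p ih =>
    cases t with
    | leaf => rfl
    | node a b c => exact ih _

lemma sub_append_singleton_of_eq_node {t a b c : TTree} {p : List (Fin 3)}
    (h : t.sub p = some (node a b c)) (j : Fin 3) :
    t.sub (p ++ [j]) = some (if j = 0 then a else if j = 1 then b else c) := by
  simp [sub_append, h, sub]

lemma isLeaf_append {t s : TTree} {p l : List (Fin 3)} (hp : t.sub p = some s)
    (hl : s.isLeaf l) : t.isLeaf (p ++ l) := by
  simpa [isLeaf, sub_append, hp] using hl

def leaves : TTree → Finset (List (Fin 3))
  | leaf => {[]}
  | node a b c =>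
      a.leaves.image (List.cons 0) ∪ b.leaves.image (List.cons 1) ∪ c.leaves.image (List.cons 2)

lemma mem_leaves {t : TTree} {l : List (Fin 3)} : l ∈ t.leaves ↔ t.isLeaf l := by
  induction t generalizing l with
  | leaf => cases l <;> simp [leaves, isLeaf, sub]
  | node a b c iha ihb ihc =>
    cases l with
    | nil => simp [leaves, isLeaf, sub]
    | cons i l =>
      fin_cases i <;> simp [leaves, iha, ihb, ihc] <;> rfl

lemma sum_leaves_node {M : Type*} [AddCommMonoid M] (a b c : TTree) (f : List (Fin 3) → M) :
    ∑ l ∈ (node a b c).leaves, f l =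
      ∑ j : Fin 3, ∑ l ∈ (if j = 0 then a else if j = 1 then b else c).leaves, f (j :: l) := by
  have hdisj : ∀ (i j : Fin 3) (u v : Finset (List (Fin 3))), i ≠ j →
      Disjoint (u.image (List.cons i)) (v.image (List.cons j)) := by
    intro i j u v hij
    simp only [Finset.disjoint_left, Finset.mem_image]
    rintro _ ⟨l, -, rfl⟩ ⟨l', -, h⟩
    exact hij (List.cons.inj h).1.symm
  have hinj : ∀ (i : Fin 3) (s : Set (List (Fin 3))), Set.InjOn (List.cons i) s :=
    fun _ _ => List.cons_injective.injOn
  rw [Fin.sum_univ_three, leaves,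
    Finset.sum_union
      (Finset.disjoint_union_left.2 ⟨hdisj 0 2 _ _ (by decide), hdisj 1 2 _ _ (by decide)⟩),
    Finset.sum_union (hdisj 0 1 _ _ (by decide)), Finset.sum_image (hinj 0 _),
    Finset.sum_image (hinj 1 _), Finset.sum_image (hinj 2 _)]
  simp

variable {G : Type*} [AddCommGroup G]

def extend (t : TTree) (g : List (Fin 3) → G) (p : List (Fin 3)) : G :=
  (t.sub p).elim 0 fun s => ∑ l ∈ s.leaves, g (p ++ l)

lemma extend_of_sub_eq_none {t : TTree} {p : List (Fin 3)} (h : t.sub p = none)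
    (g : List (Fin 3) → G) : t.extend g p = 0 := by
  simp [extend, h]

lemma extend_of_isLeaf {t : TTree} {p : List (Fin 3)} (h : t.isLeaf p) (g : List (Fin 3) → G) :
    t.extend g p = g p := by
  simp [extend, show t.sub p = some leaf from h, leaves]

lemma isCDecoT_extend (t : TTree) (g : List (Fin 3) → G) : IsCDecoT t (t.extend g) := by
  rintro p ⟨a, b, c, hp⟩
  simp only [extend, hp, sub_append_singleton_of_eq_node hp, Option.elim_some, sum_leaves_node]
  simp

end TTree

section

open TTree

variable {G : Type*} [AddCommGroup G]

lemma IsCDecoT.apply_eq_sum_leaves {t s : TTree} {η : List (Fin 3) → G} (h : IsCDecoT t η)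
    {p : List (Fin 3)} (hp : t.sub p = some s) : η p = ∑ l ∈ s.leaves, η (p ++ l) := by
  induction s generalizing p with
  | leaf => simp [leaves]
  | node a b c iha ihb ihc =>
    rw [h p ⟨a, b, c, hp⟩, sum_leaves_node, Fin.sum_univ_three, Fin.sum_univ_three]
    simp only [iha (sub_append_singleton_of_eq_node hp 0),
      ihb (sub_append_singleton_of_eq_node hp 1), ihc (sub_append_singleton_of_eq_node hp 2)]
    simp

lemma IsCDecoT.apply_nil {t : TTree} {η : List (Fin 3) → G} (h : IsCDecoT t η) :
    η [] = ∑ l ∈ t.leaves, η l := by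
  simpa using h.apply_eq_sum_leaves (sub_nil t)

lemma IsCDecoT.eq_extend {t : TTree} {η g : List (Fin 3) → G} (h : IsCDecoT t η)
    (h0 : ∀ p, t.sub p = none → η p = 0) (hg : ∀ l, t.isLeaf l → η l = g l) :
    η = t.extend g := by
  funext p
  cases hp : t.sub p with
  | none => rw [h0 p hp, extend_of_sub_eq_none hp]
  | some s =>
    rw [h.apply_eq_sum_leaves hp, extend, hp, Option.elim_some]
    exact Finset.sum_congr rfl fun l hl => hg _ (isLeaf_append hp (mem_leaves.1 hl))

lemma nodeSign_mul_self {σ : ℤ} (hσ : σ * σ = 1) (p : List (Fin 3)) :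
    nodeSign σ p * nodeSign σ p = 1 := by
  rw [nodeSign, mul_mul_mul_comm, hσ, ← mul_pow]
  norm_num

namespace Couple

lemma sign_mul_self (x : CNode) : (sign x : ℝ) * sign x = 1 := by
  exact_mod_cast nodeSign_mul_self (by split_ifs <;> norm_num) x.2

lemma sign_true (p : List (Fin 3)) : sign (true, p) = nodeSign 1 p := rfl

lemma sign_false (p : List (Fin 3)) : sign (false, p) = nodeSign (-1) p := rfl

@[simp]
lemma sign_true_nil : sign (true, []) = 1 := rfl

@[simp]
lemma sign_false_nil : sign (false, []) = -1 := rfl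

lemma sum_leaves_tm {M : Type*} [AddCommMonoid M] {q : Couple} (hq : q.IsCouple)
    (f : List (Fin 3) → M) : ∑ l ∈ q.tm.leaves, f l = ∑ l ∈ q.tp.leaves, f (q.pr l) := by
  refine (Finset.sum_nbij' q.pr q.pl ?_ ?_ ?_ ?_ fun _ _ => rfl).symm <;>
    simp only [mem_leaves]
  exacts [hq.pr_leaf, hq.pl_leaf, hq.pl_pr, hq.pr_pl]

end Couple

lemma IsCDeco.root_eq {q : Couple} (hq : q.IsCouple) {η : CNode → G} (hη : IsCDeco q η) :
    η (true, []) = η (false, []) := by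
  rw [hη.1.apply_nil, hη.2.1.apply_nil, Couple.sum_leaves_tm hq]
  exact Finset.sum_congr rfl fun l hl => hη.2.2 l (mem_leaves.1 hl)

/-- `ι ζ` is a `𝒞`-decoration of each tree, so its root values are leaf sums, and these are
opposite because the pairing flips the signs of the leaves. -/
lemma IsDDeco.root_eq {q : Couple} (hq : q.IsCouple) {ζ : CNode → G} (hζ : IsDDeco q ζ) :
    ζ (true, []) = ζ (false, []) := by
  have htp := IsCDecoT.apply_nil (η := fun p => nodeSign 1 p • ζ (true, p)) hζ.1
  have htm := IsCDecoT.apply_nil (η := fun p => nodeSign (-1) p • ζ (false, p)) hζ.2.1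
  rw [Couple.sum_leaves_tm hq] at htm
  have hpair : ∀ l ∈ q.tp.leaves,
      nodeSign (-1) (q.pr l) • ζ (false, q.pr l) = -(nodeSign 1 l • ζ (true, l)) := by
    intro l hl
    have hsign : nodeSign (-1) (q.pr l) = -nodeSign 1 l := hq.sign_pr l (mem_leaves.1 hl)
    rw [← hζ.2.2 l (mem_leaves.1 hl), hsign, neg_smul]
  rw [Finset.sum_congr rfl hpair, Finset.sum_neg_distrib, ← htp] at htm
  simpa [nodeSign] using htm.symm

end

section

open TTree

variable {V : Type*} [AddCommGroup V] [Module ℝ V]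

lemma IsDDecoT.add_sign_div_smul {t : TTree} {σ : ℤ} (hσ : σ * σ = 1) (c : ℝ)
    {ζ η : List (Fin 3) → V} (hD : IsDDecoT t σ ζ) (hC : IsCDecoT t η) :
    IsDDecoT t σ (fun p => ζ p + ((nodeSign σ p : ℝ) / c) • η p) := by
  intro p hp
  have hsq : ∀ r, (nodeSign σ r : ℝ) * ((nodeSign σ r : ℝ) / c) = 1 / c := fun r => by
    rw [← mul_div_assoc, ← Int.cast_mul, nodeSign_mul_self hσ, Int.cast_one]
  have hDp : (nodeSign σ p : ℝ) • ζ p = ∑ j, (nodeSign σ (p ++ [j]) : ℝ) • ζ (p ++ [j]) := by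
    simpa only [Int.cast_smul_eq_zsmul] using hD p hp
  simp only [← Int.cast_smul_eq_zsmul ℝ, smul_add, smul_smul, hsq, Finset.sum_add_distrib,
    ← Finset.smul_sum, ← hC p hp, hDp]

def combine : ((CNode → V) × (CNode → V)) →ₗ[ℝ] CNode → V where
  toFun p x := p.2 x + ((Couple.sign x : ℝ) / 2) • p.1 x
  map_add' a b := by
    funext x
    simp only [Prod.fst_add, Prod.snd_add, Pi.add_apply, smul_add]
    abel
  map_smul' c a := by
    funext x
    simp only [Prod.smul_fst, Prod.smul_snd, Pi.smul_apply, smul_add, RingHom.id_apply]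
    rw [smul_comm]

namespace Couple

def source (q : Couple) : Set ((CNode → V) × (CNode → V)) :=
  {p | IsCDeco q p.1 ∧ IsDDeco q p.2 ∧ ∀ x : CNode, ¬ q.isNode x → p.1 x = 0 ∧ p.2 x = 0}

def target (q : Couple) : Set (CNode → V) :=
  {ξ | IsDDecoPair q ξ ∧ ∀ x : CNode, ¬ q.isNode x → ξ x = 0}

lemma not_isNode_iff {q : Couple} {b : Bool} {p : List (Fin 3)} :
    ¬ q.isNode (b, p) ↔ (q.tree b).sub p = none := by
  simp [isNode, TTree.valid]

lemma mapsTo_combine (q : Couple) : Set.MapsTo (combine (V := V)) q.source q.target := by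
  rintro ⟨η, ζ⟩ ⟨hC, hD, h0⟩
  dsimp only at hC hD h0
  refine ⟨⟨hD.1.add_sign_div_smul (by norm_num) 2 hC.1,
    hD.2.1.add_sign_div_smul (by norm_num) 2 hC.2.1⟩, fun x hx => ?_⟩
  simp [combine, (h0 x hx).1, (h0 x hx).2]

/-- If `ξ = ζ + ι η / 2`, then `ξ_l - ξ_{l'} = ι_l η_l` at every leaf pair `(l, l')`, since `η`
and `ζ` agree there while `ι` flips; so `ι_l (ξ_l - ξ_{l'})` recovers `η_l`. -/
def leafGap (q : Couple) (ξ : CNode → V) (l : List (Fin 3)) : V :=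
  (sign (true, l) : ℝ) • (ξ (true, l) - ξ (false, q.pr l))

def cPart (q : Couple) (ξ : CNode → V) (x : CNode) : V :=
  if x.1 then q.tp.extend (q.leafGap ξ) x.2 else q.tm.extend (fun l => q.leafGap ξ (q.pl l)) x.2

def split (q : Couple) (ξ : CNode → V) : (CNode → V) × (CNode → V) :=
  (q.cPart ξ, fun x => ξ x - ((sign x : ℝ) / 2) • q.cPart ξ x)

lemma cPart_eq_zero (q : Couple) (ξ : CNode → V) {x : CNode} (hx : ¬ q.isNode x) :
    q.cPart ξ x = 0 := by
  obtain ⟨_ | _, p⟩ := x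
  · exact extend_of_sub_eq_none (not_isNode_iff.1 hx) fun l => q.leafGap ξ (q.pl l)
  · exact extend_of_sub_eq_none (not_isNode_iff.1 hx) (q.leafGap ξ)

lemma isCDeco_cPart {q : Couple} (hq : q.IsCouple) (ξ : CNode → V) : IsCDeco q (q.cPart ξ) := by
  refine ⟨isCDecoT_extend q.tp _, isCDecoT_extend q.tm fun l => q.leafGap ξ (q.pl l),
    fun l hl => ?_⟩
  simp only [cPart, ↓reduceIte, Bool.false_eq_true, extend_of_isLeaf hl,
    extend_of_isLeaf (hq.pr_leaf l hl), hq.pl_pr l hl]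

lemma leafGap_combine {q : Couple} (hq : q.IsCouple) {η ζ : CNode → V} (hC : IsCDeco q η)
    (hD : IsDDeco q ζ) {l : List (Fin 3)} (hl : q.tp.isLeaf l) :
    q.leafGap (combine (η, ζ)) l = η (true, l) := by
  have hsign : (sign (false, q.pr l) : ℝ) = -sign (true, l) := by exact_mod_cast hq.sign_pr l hl
  simp only [leafGap, combine, LinearMap.coe_mk, AddHom.coe_mk, ← hD.2.2 l hl, ← hC.2.2 l hl,
    hsign]
  rw [add_sub_add_left_eq_sub, ← sub_smul, smul_smul, neg_div, sub_neg_eq_add, add_halves,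
    sign_mul_self, one_smul]

lemma cPart_combine {q : Couple} (hq : q.IsCouple) {η ζ : CNode → V} (hp : (η, ζ) ∈ q.source) :
    q.cPart (combine (η, ζ)) = η := by
  obtain ⟨hC, hD, h0⟩ := hp
  have htp : (fun p => η (true, p)) = q.tp.extend (q.leafGap (combine (η, ζ))) :=
    hC.1.eq_extend (fun p hp => (h0 (true, p) (not_isNode_iff.2 hp)).1)
      fun l hl => (leafGap_combine hq hC hD hl).symm
  have htm : (fun p => η (false, p)) =
      q.tm.extend (fun l => q.leafGap (combine (η, ζ)) (q.pl l)) :=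
    hC.2.1.eq_extend (fun p hp => (h0 (false, p) (not_isNode_iff.2 hp)).1) fun l hl => by
      rw [leafGap_combine hq hC hD (hq.pl_leaf l hl), hC.2.2 _ (hq.pl_leaf l hl), hq.pr_pl l hl]
  funext x
  obtain ⟨_ | _, p⟩ := x
  exacts [(congrFun htm p).symm, (congrFun htp p).symm]

lemma isDDeco_split {q : Couple} (hq : q.IsCouple) {ξ : CNode → V} (hξ : IsDDecoPair q ξ) :
    IsDDeco q (q.split ξ).2 := by
  have hC := isCDeco_cPart hq ξ
  refine ⟨?_, ?_, fun l hl => ?_⟩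
  · simpa only [split, sign_true, div_neg, neg_smul, ← sub_eq_add_neg] using
      hξ.1.add_sign_div_smul (by norm_num) (-2) hC.1
  · simpa only [split, sign_false, div_neg, neg_smul, ← sub_eq_add_neg] using
      hξ.2.add_sign_div_smul (by norm_num) (-2) hC.2.1
  · have hsign : (sign (false, q.pr l) : ℝ) = -sign (true, l) := by exact_mod_cast hq.sign_pr l hl
    change ξ (true, l) - _ • q.cPart ξ (true, l) =
      ξ (false, q.pr l) - _ • q.cPart ξ (false, q.pr l)
    rw [← hC.2.2 l hl]
    simp only [cPart, ↓reduceIte, extend_of_isLeaf hl, leafGap, hsign, smul_smul, neg_div,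
      neg_mul, div_mul_eq_mul_div, sign_mul_self]
    module

lemma mapsTo_split {q : Couple} (hq : q.IsCouple) :
    Set.MapsTo (q.split (V := V)) q.target q.source :=
  fun ξ ⟨hξ, h0⟩ => ⟨isCDeco_cPart hq ξ, isDDeco_split hq hξ, fun x hx =>
    ⟨cPart_eq_zero q ξ hx, by simp [split, h0 x hx, cPart_eq_zero q ξ hx]⟩⟩

lemma invOn_split_combine {q : Couple} (hq : q.IsCouple) :
    Set.InvOn (q.split (V := V)) combine q.source q.target := by
  refine ⟨fun ⟨η, ζ⟩ hp => ?_, fun ξ _ => ?_⟩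
  · simp only [split, cPart_combine hq hp, Prod.mk.injEq, true_and]
    funext x
    simp [combine]
  · funext x
    simp [split, combine]

lemma bijOn_combine {q : Couple} (hq : q.IsCouple) :
    Set.BijOn (combine (V := V)) q.source q.target :=
  (invOn_split_combine hq).bijOn (mapsTo_combine q) (mapsTo_split hq)

lemma combine_apply_true_nil (p : (CNode → V) × (CNode → V)) :
    combine p (true, []) = p.2 (true, []) + (2⁻¹ : ℝ) • p.1 (true, []) := by
  simp [combine]

lemma combine_apply_false_nil (p : (CNode → V) × (CNode → V)) :
    combine p (false, []) = p.2 (false, []) - (2⁻¹ : ℝ) • p.1 (false, []) := by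
  simp [combine, neg_div, sub_eq_add_neg]

/-- The two roots carry the same `η` and the same `ζ` (`root_eq`), so the two root values of
`ξ` determine them: their difference is `η`, their mean is `ζ`. -/
lemma bijOn_combine_roots {q : Couple} (hq : q.IsCouple) (η ζ : V) :
    Set.BijOn combine
      (q.source ∩ {p | p.1 (true, []) = η ∧ p.1 (false, []) = η ∧
        p.2 (true, []) = ζ ∧ p.2 (false, []) = ζ})
      (q.target ∩ {ξ | ξ (true, []) = ζ + (2⁻¹ : ℝ) • η ∧ ξ (false, []) = ζ - (2⁻¹ : ℝ) • η}) := by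
  refine (bijOn_combine hq).inter_mapsTo ?_ ?_
  · rintro p ⟨hη₁, hη₂, hζ₁, hζ₂⟩
    simp only [Set.mem_ofPred_eq, combine_apply_true_nil, combine_apply_false_nil]
    rw [hη₁, hη₂, hζ₁, hζ₂]
    exact ⟨rfl, rfl⟩
  · rintro ⟨η', ζ'⟩ ⟨⟨hC, hD, -⟩, h₁, h₂⟩
    rw [combine_apply_true_nil] at h₁
    rw [combine_apply_false_nil, ← hC.root_eq hq, ← hD.root_eq hq] at h₂
    have hη : η' (true, []) = η := by linear_combination (norm := module) h₁ - h₂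
    have hζ : ζ' (true, []) = ζ := by linear_combination (norm := module) (2⁻¹ : ℝ) • (h₁ + h₂)
    exact ⟨hη, hC.root_eq hq ▸ hη, hζ, hD.root_eq hq ▸ hζ⟩

end Couple

end

theorem statement19_general (d : ℕ) (q : Couple) (hq : q.IsCouple) :
    (∀ a b : (CNode → EuclideanSpace ℝ (Fin d)) × (CNode → EuclideanSpace ℝ (Fin d)),
      (fun x : CNode => (a + b).2 x + ((Couple.sign x : ℝ) / 2) • (a + b).1 x) =
        (fun x : CNode => a.2 x + ((Couple.sign x : ℝ) / 2) • a.1 x) +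
          fun x : CNode => b.2 x + ((Couple.sign x : ℝ) / 2) • b.1 x) ∧
    (∀ (c : ℝ)
        (a : (CNode → EuclideanSpace ℝ (Fin d)) × (CNode → EuclideanSpace ℝ (Fin d))),
      (fun x : CNode => (c • a).2 x + ((Couple.sign x : ℝ) / 2) • (c • a).1 x) =
        c • fun x : CNode => a.2 x + ((Couple.sign x : ℝ) / 2) • a.1 x) ∧
    Set.BijOn
      (fun p : (CNode → EuclideanSpace ℝ (Fin d)) × (CNode → EuclideanSpace ℝ (Fin d)) =>
        fun x : CNode => p.2 x + ((Couple.sign x : ℝ) / 2) • p.1 x)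
      {p | IsCDeco q p.1 ∧ IsDDeco q p.2 ∧
        ∀ x : CNode, ¬ q.isNode x → p.1 x = 0 ∧ p.2 x = 0}
      {ξ | IsDDecoPair q ξ ∧ ∀ x : CNode, ¬ q.isNode x → ξ x = 0} ∧
    ∀ η ζ : EuclideanSpace ℝ (Fin d),
      Set.BijOn
        (fun p : (CNode → EuclideanSpace ℝ (Fin d)) × (CNode → EuclideanSpace ℝ (Fin d)) =>
          fun x : CNode => p.2 x + ((Couple.sign x : ℝ) / 2) • p.1 x)
        {p | IsCDeco q p.1 ∧ IsDDeco q p.2 ∧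
          (∀ x : CNode, ¬ q.isNode x → p.1 x = 0 ∧ p.2 x = 0) ∧
          p.1 ((true, []) : CNode) = η ∧ p.1 ((false, []) : CNode) = η ∧
          p.2 ((true, []) : CNode) = ζ ∧ p.2 ((false, []) : CNode) = ζ}
        {ξ | IsDDecoPair q ξ ∧ (∀ x : CNode, ¬ q.isNode x → ξ x = 0) ∧
          ξ ((true, []) : CNode) = ζ + (2⁻¹ : ℝ) • η ∧
          ξ ((false, []) : CNode) = ζ - (2⁻¹ : ℝ) • η} := by
  refine ⟨fun a b => map_add combine a b, fun c a => map_smul combine c a, Couple.bijOn_combine hq,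
    fun η ζ => ?_⟩
  convert Couple.bijOn_combine_roots hq η ζ using 1
  · rfl
  all_goals
    ext
    simp only [Couple.source, Couple.target, Set.mem_inter_iff, Set.mem_ofPred_eq, and_assoc]

/-- The map `(η, ζ) ↦ ξ`, `ξ_n = ζ_n + ι_n η_n / 2`, is a linear
isomorphism from `𝒞^q(ℝ^d) × 𝒟^q(ℝ^d)` onto `𝒟^{τ*}(ℝ^d)`, restricting, for all
`η, ζ ∈ ℝ^d`, to a bijection from `𝒞^q_η × 𝒟^q_ζ` onto `𝒟^{τ*}_{ζ+η/2, ζ−η/2}`.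
(Decorations are regarded as maps on the nodes, i.e. extended by `0` off the nodes.) -/
theorem statement19 (d : ℕ) (hd : 1 ≤ d) (q : Couple) (hq : q.IsCouple) :
    (∀ a b : (CNode → EuclideanSpace ℝ (Fin d)) × (CNode → EuclideanSpace ℝ (Fin d)),
      (fun x : CNode => (a + b).2 x + ((Couple.sign x : ℝ) / 2) • (a + b).1 x) =
        (fun x : CNode => a.2 x + ((Couple.sign x : ℝ) / 2) • a.1 x) +
          fun x : CNode => b.2 x + ((Couple.sign x : ℝ) / 2) • b.1 x) ∧
    (∀ (c : ℝ)
        (a : (CNode → EuclideanSpace ℝ (Fin d)) × (CNode → EuclideanSpace ℝ (Fin d))),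
      (fun x : CNode => (c • a).2 x + ((Couple.sign x : ℝ) / 2) • (c • a).1 x) =
        c • fun x : CNode => a.2 x + ((Couple.sign x : ℝ) / 2) • a.1 x) ∧
    Set.BijOn
      (fun p : (CNode → EuclideanSpace ℝ (Fin d)) × (CNode → EuclideanSpace ℝ (Fin d)) =>
        fun x : CNode => p.2 x + ((Couple.sign x : ℝ) / 2) • p.1 x)
      {p | IsCDeco q p.1 ∧ IsDDeco q p.2 ∧
        ∀ x : CNode, ¬ q.isNode x → p.1 x = 0 ∧ p.2 x = 0}
      {ξ | IsDDecoPair q ξ ∧ ∀ x : CNode, ¬ q.isNode x → ξ x = 0} ∧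
    ∀ η ζ : EuclideanSpace ℝ (Fin d),
      Set.BijOn
        (fun p : (CNode → EuclideanSpace ℝ (Fin d)) × (CNode → EuclideanSpace ℝ (Fin d)) =>
          fun x : CNode => p.2 x + ((Couple.sign x : ℝ) / 2) • p.1 x)
        {p | IsCDeco q p.1 ∧ IsDDeco q p.2 ∧
          (∀ x : CNode, ¬ q.isNode x → p.1 x = 0 ∧ p.2 x = 0) ∧
          p.1 ((true, []) : CNode) = η ∧ p.1 ((false, []) : CNode) = η ∧
          p.2 ((true, []) : CNode) = ζ ∧ p.2 ((false, []) : CNode) = ζ}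
        {ξ | IsDDecoPair q ξ ∧ (∀ x : CNode, ¬ q.isNode x → ξ x = 0) ∧
          ξ ((true, []) : CNode) = ζ + (2⁻¹ : ℝ) • η ∧
          ξ ((false, []) : CNode) = ζ - (2⁻¹ : ℝ) • η} :=
  statement19_general d q hq

end WickNLS

end
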